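/- (Potential increment identity) Let V be a real Hilbert space, λ > 0, a_1,…,a_m ∈ V, and let A = λI + Σ_{i=1}^m a_i ⊗ a_i (an invertible operator on V). Let ζ, g ∈ V, and set A' = A + g ⊗ g, ζ' = ζ + g, μ = ⟨g, A^{-1} g⟩, and ν = ⟨g, A^{-1} ζ⟩. Then ⟨ζ', A'^{-1} ζ'⟩ - ⟨ζ, A^{-1} ζ⟩ = (μ + 2ν - ν²)/(1 + μ). In particular, if ν ≤ 0 then ⟨ζ', A'^{-1} ζ'⟩ - ⟨ζ, A^{-1} ζ⟩ ≤ μ/(1 + μ). -/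

import Mathlib

open scoped RealInnerProductSpace

/-- The rank-one operator `a ⊗ a : v ↦ ⟪a, v⟫ • a` on a real inner product space. -/
noncomputable def rankOne {V : Type*} [NormedAddCommGroup V] [InnerProductSpace ℝ V]
    (a : V) : V →L[ℝ] V :=
  (innerSL ℝ a).smulRight a

/-!
By the Sherman–Morrison formula, `(A + g ⊗ g)⁻¹ = A⁻¹ - (1 + μ)⁻¹ (A⁻¹ g ⊗ A⁻¹ g)`, which is
legitimate because `A ≥ λ` is invertible (Lax–Milgram) and positive, so that `A⁻¹` is positive
and `μ ≥ 0`. Expanding the quadratic form at `ζ + g`, the increment is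
`2ν + μ - (ν + μ)² / (1 + μ) = (μ + 2ν - ν²) / (1 + μ)`, and `2ν - ν² ≤ 0` when `ν ≤ 0`.
-/

open scoped Ring

theorem Ring.inverse_add_of_mul_inverse_mul {𝕜 R : Type*} [Field 𝕜] [Ring R] [Algebra 𝕜 R]
    {A G : R} (hA : IsUnit A) {μ : 𝕜} (hG : G * A⁻¹ʳ * G = μ • G) (hμ : 1 + μ ≠ 0) :
    (A + G)⁻¹ʳ = A⁻¹ʳ - (1 + μ)⁻¹ • (A⁻¹ʳ * G * A⁻¹ʳ) := by
  have hAB : A * A⁻¹ʳ = 1 := Ring.mul_inverse_cancel A hA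
  have hBA : A⁻¹ʳ * A = 1 := Ring.inverse_mul_cancel A hA
  refine Ring.inverse_unit ⟨A + G, _, ?_, ?_⟩
  · calc (A + G) * (A⁻¹ʳ - (1 + μ)⁻¹ • (A⁻¹ʳ * G * A⁻¹ʳ))
        = 1 + G * A⁻¹ʳ - ((1 + μ)⁻¹ * (1 + μ)) • (G * A⁻¹ʳ) := by
          have hA_BGB : A * (A⁻¹ʳ * G * A⁻¹ʳ) = G * A⁻¹ʳ := by
            rw [mul_assoc, ← mul_assoc, hAB, one_mul]
          have hG_BGB : G * (A⁻¹ʳ * G * A⁻¹ʳ) = μ • (G * A⁻¹ʳ) := by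
            rw [← mul_assoc, ← mul_assoc, hG, smul_mul_assoc]
          rw [add_mul, mul_sub, mul_sub, mul_smul_comm, mul_smul_comm, hAB, hA_BGB, hG_BGB]
          module
      _ = 1 := by rw [inv_mul_cancel₀ hμ, one_smul, add_sub_cancel_right]
  · calc (A⁻¹ʳ - (1 + μ)⁻¹ • (A⁻¹ʳ * G * A⁻¹ʳ)) * (A + G)
        = 1 + A⁻¹ʳ * G - ((1 + μ)⁻¹ * (1 + μ)) • (A⁻¹ʳ * G) := by
          have hBGB_A : A⁻¹ʳ * G * A⁻¹ʳ * A = A⁻¹ʳ * G := by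
            rw [mul_assoc, hBA, mul_one]
          have hBGB_G : A⁻¹ʳ * G * A⁻¹ʳ * G = μ • (A⁻¹ʳ * G) := by
            rw [mul_assoc, mul_assoc, ← mul_assoc G, hG, mul_smul_comm]
          rw [mul_add, sub_mul, sub_mul, smul_mul_assoc, smul_mul_assoc, hBA, hBGB_A, hBGB_G]
          module
      _ = 1 := by rw [inv_mul_cancel₀ hμ, one_smul, add_sub_cancel_right]

namespace ContinuousLinearMap

variable {𝕜 E : Type*} [RCLike 𝕜] [NormedAddCommGroup E] [InnerProductSpace 𝕜 E] [CompleteSpace E]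

theorem IsPositive.ringInverse {T : E →L[𝕜] E} (hT : T.IsPositive) : (T⁻¹ʳ).IsPositive := by
  by_cases hu : IsUnit T
  · refine (isPositive_iff' _).2 ⟨hT.isSelfAdjoint.ringInverse, fun x => ?_⟩
    have hx : T (T⁻¹ʳ x) = x := by
      rw [← mul_apply_eq_comp, Ring.mul_inverse_cancel T hu, one_apply_eq_self]
    simpa only [hx] using hT.inner_nonneg_right (T⁻¹ʳ x)
  · rw [Ring.inverse_non_unit T hu]
    exact isPositive_zero

end ContinuousLinearMap

section RealHilbert

variable {V : Type*} [NormedAddCommGroup V] [InnerProductSpace ℝ V]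

@[simp]
theorem rankOne_apply (a v : V) : rankOne a v = ⟪a, v⟫ • a := rfl

theorem isPositive_rankOne (a : V) : (rankOne a).IsPositive :=
  InnerProductSpace.isPositive_rankOne_self a

theorem rankOne_mul_mul_rankOne (B : V →L[ℝ] V) (g : V) :
    rankOne g * B * rankOne g = ⟪g, B g⟫ • rankOne g := by
  ext v
  simp only [mul_apply_eq_comp, smul_apply, rankOne_apply, map_smul, smul_smul, mul_comm]

theorem mul_rankOne_mul [CompleteSpace V] {B : V →L[ℝ] V} (hB : IsSelfAdjoint B) (g : V) :
    B * rankOne g * B = rankOne (B g) := by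
  ext v
  simp only [mul_apply_eq_comp, rankOne_apply, map_smul]
  exact congrArg (· • B g) (hB.isSymmetric g v).symm

theorem ContinuousLinearMap.isUnit_of_coercive [CompleteSpace V] {T : V →L[ℝ] V} {c : ℝ}
    (hc : 0 < c) (hT : ∀ v, c * ‖v‖ * ‖v‖ ≤ ⟪T v, v⟫) : IsUnit T := by
  have hcoer : IsCoercive ((innerSL ℝ).comp T) := ⟨c, hc, hT⟩
  set e := hcoer.continuousLinearEquivOfBilin
  have he : (e : V →L[ℝ] V) = T :=
    ext fun v => ext_inner_right ℝ fun w => hcoer.continuousLinearEquivOfBilin_apply v w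
  exact he ▸ ⟨(ContinuousLinearEquiv.unitsEquiv ℝ V).symm e, rfl⟩

theorem ContinuousLinearMap.IsPositive.isUnit_smul_one_add [CompleteSpace V] {P : V →L[ℝ] V}
    (hP : P.IsPositive) {c : ℝ} (hc : 0 < c) : IsUnit (c • 1 + P) := by
  refine isUnit_of_coercive hc fun v => ?_
  rw [add_apply, inner_add_left, smul_apply, one_apply_eq_self, real_inner_smul_left,
    real_inner_self_eq_norm_mul_norm, ← mul_assoc]
  exact le_add_of_nonneg_right (hP.inner_nonneg_left v)

theorem ringInverse_add_rankOne [CompleteSpace V] {A : V →L[ℝ] V} (hA : IsUnit A)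
    (hA' : IsSelfAdjoint A) (g : V) (hg : 1 + ⟪g, A⁻¹ʳ g⟫ ≠ 0) :
    (A + rankOne g)⁻¹ʳ = A⁻¹ʳ - (1 + ⟪g, A⁻¹ʳ g⟫)⁻¹ • rankOne (A⁻¹ʳ g) := by
  rw [Ring.inverse_add_of_mul_inverse_mul hA (rankOne_mul_mul_rankOne _ g) hg,
    mul_rankOne_mul hA'.ringInverse]

end RealHilbert

/-- Potential increment identity: with `A = λI + Σ aᵢ ⊗ aᵢ`, `A' = A + g ⊗ g`,
`ζ' = ζ + g`, `μ = ⟪g, A⁻¹ g⟫`, and `ν = ⟪g, A⁻¹ ζ⟫`, one has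
`⟪ζ', A'⁻¹ ζ'⟫ - ⟪ζ, A⁻¹ ζ⟫ = (μ + 2ν - ν²)/(1 + μ)`; in particular, if `ν ≤ 0`
then the increment is at most `μ/(1 + μ)`. -/
theorem potential_increment_identity
    {V : Type*} [NormedAddCommGroup V] [InnerProductSpace ℝ V] [CompleteSpace V]
    (lam : ℝ) (hlam : 0 < lam) (m : ℕ) (a : Fin m → V)
    (A : V →L[ℝ] V) (hA : A = lam • (1 : V →L[ℝ] V) + ∑ i, rankOne (a i))
    (ζ g : V) (μ ν : ℝ)
    (hμ : μ = ⟪g, (Ring.inverse A) g⟫) (hν : ν = ⟪g, (Ring.inverse A) ζ⟫) :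
    ⟪ζ + g, (Ring.inverse (A + rankOne g)) (ζ + g)⟫ - ⟪ζ, (Ring.inverse A) ζ⟫ =
      (μ + 2 * ν - ν ^ 2) / (1 + μ) ∧
    (ν ≤ 0 →
      ⟪ζ + g, (Ring.inverse (A + rankOne g)) (ζ + g)⟫ - ⟪ζ, (Ring.inverse A) ζ⟫ ≤
        μ / (1 + μ)) := by
  have hP : (∑ i, rankOne (a i)).IsPositive :=
    ContinuousLinearMap.isPositive_sum _ fun i _ => isPositive_rankOne (a i)
  have hApos : A.IsPositive :=
    hA ▸ (ContinuousLinearMap.isPositive_one.smul_of_nonneg hlam.le).add hP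
  have hAunit : IsUnit A := hA ▸ hP.isUnit_smul_one_add hlam
  have hB : (A⁻¹ʳ).IsPositive := hApos.ringInverse
  have hμ1 : 0 < 1 + μ := by linarith [hμ ▸ hB.inner_nonneg_right g]
  have hgζ : ⟪A⁻¹ʳ g, ζ⟫ = ν := hν ▸ hB.inner_left_eq_inner_right g ζ
  have hζg : ⟪ζ, A⁻¹ʳ g⟫ = ν := real_inner_comm ζ _ ▸ hgζ
  have hincrement : ⟪ζ + g, (A + rankOne g)⁻¹ʳ (ζ + g)⟫ - ⟪ζ, A⁻¹ʳ ζ⟫ =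
      (μ + 2 * ν - ν ^ 2) / (1 + μ) := by
    rw [ringInverse_add_rankOne hAunit hApos.isSelfAdjoint g (hμ ▸ hμ1.ne'), ← hμ]
    simp only [sub_apply, smul_apply, rankOne_apply, map_add, inner_sub_right, inner_add_left,
      inner_add_right, real_inner_smul_right, hgζ, hζg, ← hν, ← hμ, real_inner_comm g]
    field_simp
    ring
  refine ⟨hincrement, fun hν0 => hincrement ▸ ?_⟩
  gcongr
  nlinarith
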